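/- Let V be a real symmetric 2n×2n matrix with V + iΩ ≻ 0. Then every complex eigenvalue μ of the matrix VΩ is purely imaginary with |μ| > 1; equivalently, every complex eigenvalue of (VΩ)² is a real number strictly less than −1, so that I + (VΩ)^{-2} has all its eigenvalues real and strictly between 0 and 1. -/

import Mathlib

/-!
Since `VΩ` and `ΩV` have the same characteristic polynomial, an eigenvalue `μ` of `VΩ` comes with
`z ≠ 0` such that `ΩVz = μz`; as `Ω² = -1` this reads `Vz = (iμ)(iΩ)z`. Both `V + iΩ` and its
transpose `V - iΩ` are positive definite, so `a = z*Vz` and `b = z*(iΩ)z` satisfy `a ± b > 0` with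
`a = (iμ)b`: hence `iμ = a/b` is real of modulus `> 1`. The claims about `(VΩ)²` and
`I + (VΩ)⁻²` follow by spectral mapping.
-/

noncomputable section
open Matrix
open scoped ComplexOrder

/-- The standard `2n × 2n` symplectic form matrix `Ω = [[0, I], [-I, 0]]`. -/
def Om (n : ℕ) : Matrix (Fin n ⊕ Fin n) (Fin n ⊕ Fin n) ℝ :=
  Matrix.fromBlocks 0 1 (-1) 0

/-- Complexification of a real matrix. -/
def cm {k l : Type*} (A : Matrix k l ℝ) : Matrix k l ℂ := A.map Complex.ofReal

theorem RCLike.exists_real_one_lt_abs_of_eq_mul {𝕜 : Type*} [RCLike 𝕜] {a b c : 𝕜}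
    (hadd : 0 < a + b) (hsub : 0 < a - b) (h : a = c * b) : ∃ t : ℝ, c = t ∧ 1 < |t| := by
  obtain ⟨hre_add, him_add⟩ := RCLike.pos_iff.mp hadd
  obtain ⟨hre_sub, him_sub⟩ := RCLike.pos_iff.mp hsub
  simp only [map_add, map_sub] at hre_add him_add hre_sub him_sub
  have ha : (RCLike.re a : 𝕜) = a :=
    RCLike.conj_eq_iff_re.mp (RCLike.conj_eq_iff_im.mpr (by linarith))
  have hb : (RCLike.re b : 𝕜) = b :=
    RCLike.conj_eq_iff_re.mp (RCLike.conj_eq_iff_im.mpr (by linarith))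
  have hlt : |RCLike.re b| < RCLike.re a := abs_lt.mpr ⟨by linarith, by linarith⟩
  have hb0 : RCLike.re b ≠ 0 := by
    intro h0
    rw [← hb, h0, RCLike.ofReal_zero, mul_zero, ← ha, RCLike.ofReal_eq_zero] at h
    simp [h, h0] at hlt
  refine ⟨RCLike.re a / RCLike.re b, ?_, ?_⟩
  · have hb' : b ≠ 0 := by rwa [← hb, RCLike.ofReal_ne_zero]
    rw [RCLike.ofReal_div, ha, hb, h, mul_div_cancel_right₀ _ hb']
  · rwa [abs_div, one_lt_div (abs_pos.mpr hb0), abs_of_pos ((abs_nonneg _).trans_lt hlt)]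

theorem Matrix.exists_real_one_lt_abs_of_mulVec_eq_smul_mulVec {𝕜 ι : Type*} [RCLike 𝕜]
    [Fintype ι] {A B : Matrix ι ι 𝕜} (hadd : (A + B).PosDef) (hsub : (A - B).PosDef)
    {y : ι → 𝕜} (hy : y ≠ 0) {c : 𝕜} (h : A *ᵥ y = c • B *ᵥ y) :
    ∃ t : ℝ, c = t ∧ 1 < |t| := by
  refine RCLike.exists_real_one_lt_abs_of_eq_mul (a := star y ⬝ᵥ A *ᵥ y) (b := star y ⬝ᵥ B *ᵥ y)
    ?_ ?_ (by rw [h, dotProduct_smul, smul_eq_mul])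
  · simpa only [add_mulVec, dotProduct_add] using hadd.dotProduct_mulVec_pos hy
  · simpa only [sub_mulVec, dotProduct_sub] using hsub.dotProduct_mulVec_pos hy

theorem Matrix.exists_mulVec_eq_smul_of_mem_spectrum {K ι : Type*} [Field K] [Fintype ι]
    [DecidableEq ι] {M : Matrix ι ι K} {μ : K} (h : μ ∈ spectrum K M) :
    ∃ z ≠ 0, M *ᵥ z = μ • z := by
  rw [← spectrum_toLin', ← Module.End.hasEigenvalue_iff_mem_spectrum] at h
  obtain ⟨z, hz⟩ := h.exists_hasEigenvector
  exact ⟨z, hz.2, by simpa using hz.apply_eq_smul⟩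

theorem cm_transpose {k l : Type*} (A : Matrix k l ℝ) : (cm A)ᵀ = cm Aᵀ := rfl

section Complexification

variable {k : Type*} [Fintype k] [DecidableEq k]

theorem cm_mul (A B : Matrix k k ℝ) : cm (A * B) = cm A * cm B :=
  map_mul Complex.ofRealHom.mapMatrix A B

theorem cm_pow (A : Matrix k k ℝ) (m : ℕ) : cm (A ^ m) = cm A ^ m :=
  map_pow Complex.ofRealHom.mapMatrix A m

theorem cm_one : cm (1 : Matrix k k ℝ) = 1 := map_one Complex.ofRealHom.mapMatrix

theorem cm_add (A B : Matrix k k ℝ) : cm (A + B) = cm A + cm B :=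
  map_add Complex.ofRealHom.mapMatrix A B

theorem cm_neg (A : Matrix k k ℝ) : cm (-A) = -cm A := map_neg Complex.ofRealHom.mapMatrix A

theorem cm_inv (A : Matrix k k ℝ) : cm A⁻¹ = (cm A)⁻¹ := by
  have hdet : (cm A).det = A.det := (Complex.ofRealHom.map_det A).symm
  have hadj : (cm A).adjugate = cm A.adjugate := (Complex.ofRealHom.map_adjugate A).symm
  rw [inv_def, inv_def, hdet, hadj, Ring.inverse_eq_inv', Ring.inverse_eq_inv']
  ext i j
  simp [cm]

end Complexification

theorem Om_mul_Om (n : ℕ) : Om n * Om n = -1 := by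
  simp [Om, fromBlocks_multiply, ← fromBlocks_one, fromBlocks_neg]

theorem Om_transpose (n : ℕ) : (Om n)ᵀ = -Om n := by
  simp [Om, fromBlocks_transpose, fromBlocks_neg]

section Symplectic

variable {ι : Type*} [Fintype ι] [DecidableEq ι]

theorem posDef_cm_sub_I_smul {V J : Matrix ι ι ℝ} (hV : V.IsSymm) (hJ : Jᵀ = -J)
    (h : (cm V + Complex.I • cm J).PosDef) : (cm V - Complex.I • cm J).PosDef := by
  simpa [cm_transpose, hV.eq, hJ, cm_neg, sub_eq_add_neg] using h.transpose

theorem exists_eq_ofReal_mul_I_of_mem_spectrum {V J : Matrix ι ι ℝ} (hV : V.IsSymm)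
    (hJ : Jᵀ = -J) (hJJ : J * J = -1) (h : (cm V + Complex.I • cm J).PosDef) {μ : ℂ}
    (hμ : μ ∈ spectrum ℂ (cm (V * J))) : ∃ t : ℝ, 1 < |t| ∧ μ = t * Complex.I := by
  rw [cm_mul, mem_spectrum_iff_isRoot_charpoly, charpoly_mul_comm,
    ← mem_spectrum_iff_isRoot_charpoly] at hμ
  obtain ⟨z, hz, hJV⟩ := exists_mulVec_eq_smul_of_mem_spectrum hμ
  have hJJc : cm J * cm J = -1 := by rw [← cm_mul, hJJ, cm_neg, cm_one]
  have hVz : cm V *ᵥ z = (Complex.I * μ) • (Complex.I • cm J) *ᵥ z :=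
    calc cm V *ᵥ z = -(cm J *ᵥ ((cm J * cm V) *ᵥ z)) := by
          rw [mulVec_mulVec, ← Matrix.mul_assoc, hJJc, neg_one_mul, neg_mulVec, neg_neg]
      _ = (Complex.I * μ) • (Complex.I • cm J) *ᵥ z := by
          rw [hJV, mulVec_smul, smul_mulVec, smul_smul, mul_right_comm, ← sq, Complex.I_sq,
            neg_one_mul, neg_smul]
  obtain ⟨t, hc, ht⟩ := exists_real_one_lt_abs_of_mulVec_eq_smul_mulVec h
    (posDef_cm_sub_I_smul hV hJ h) hz hVz
  refine ⟨-t, by rwa [abs_neg], ?_⟩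
  push_cast
  linear_combination -Complex.I * hc + μ * Complex.I_sq

end Symplectic

theorem Matrix.exists_mem_spectrum_eq_one_add_inv_sq {K ι : Type*} [Field K] [IsAlgClosed K]
    [Fintype ι] [DecidableEq ι] {A : Matrix ι ι K} (hA : IsUnit A) {μ : K}
    (hμ : μ ∈ spectrum K (1 + A⁻¹ ^ 2)) : ∃ ν ∈ spectrum K A, μ = 1 + ν⁻¹ ^ 2 := by
  obtain ⟨u, rfl⟩ := hA
  rw [← map_one (algebraMap K _), ← spectrum.singleton_add_eq, Set.singleton_add,
    spectrum.map_pow_of_pos _ two_pos, ← coe_units_inv, ← spectrum.map_inv] at hμ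
  obtain ⟨_, ⟨ν, hν, rfl⟩, rfl⟩ := hμ
  exact ⟨ν⁻¹, hν, by rw [inv_inv]⟩

theorem Complex.ofReal_mul_I_sq (t : ℝ) : (t * I) ^ 2 = ((-t ^ 2 : ℝ) : ℂ) := by
  push_cast
  rw [mul_pow, I_sq, mul_neg_one]

theorem Complex.one_add_inv_ofReal_mul_I_sq (t : ℝ) :
    1 + (t * I)⁻¹ ^ 2 = ((1 - (t ^ 2)⁻¹ : ℝ) : ℂ) := by
  rw [inv_pow, ofReal_mul_I_sq]
  push_cast
  ring

/-- If `V` is real symmetric with `V + iΩ ≻ 0`, then every complex eigenvalue `μ` of `VΩ` is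
purely imaginary with `|μ| > 1`; equivalently, every complex eigenvalue of `(VΩ)²` is a real
number strictly less than `-1`, so that `I + (VΩ)⁻²` has all its eigenvalues real and strictly
between `0` and `1`. -/
theorem symplectic_eigenvalues_of_faithful_covariance (n : ℕ)
    (V : Matrix (Fin n ⊕ Fin n) (Fin n ⊕ Fin n) ℝ)
    (hV : V.IsSymm)
    (hVpd : (cm V + Complex.I • cm (Om n)).PosDef) :
    (∀ μ : ℂ, (cm (V * Om n)).charpoly.IsRoot μ → μ.re = 0 ∧ 1 < ‖μ‖)
      ∧ (∀ μ : ℂ, (cm ((V * Om n) ^ 2)).charpoly.IsRoot μ → μ.im = 0 ∧ μ.re < -1)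
      ∧ (∀ μ : ℂ, (cm (1 + ((V * Om n)⁻¹) ^ 2)).charpoly.IsRoot μ →
          μ.im = 0 ∧ 0 < μ.re ∧ μ.re < 1) := by
  have hspec : ∀ μ ∈ spectrum ℂ (cm (V * Om n)), ∃ t : ℝ, 1 < |t| ∧ μ = t * Complex.I :=
    fun μ => exists_eq_ofReal_mul_I_of_mem_spectrum hV (Om_transpose n) (Om_mul_Om n) hVpd
  have hunit : IsUnit (cm (V * Om n)) := spectrum.isUnit_of_zero_notMem ℂ fun h0 => by
    obtain ⟨t, ht, h⟩ := hspec 0 h0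
    have ht0 : t = 0 := by simpa [eq_comm] using h
    norm_num [ht0] at ht
  refine ⟨fun μ hμ => ?_, fun μ hμ => ?_, fun μ hμ => ?_⟩
  · obtain ⟨t, ht, rfl⟩ := hspec μ (mem_spectrum_iff_isRoot_charpoly.2 hμ)
    simpa using ht
  · rw [← mem_spectrum_iff_isRoot_charpoly, cm_pow, spectrum.map_pow_of_pos _ two_pos] at hμ
    obtain ⟨_, hν, rfl⟩ := hμ
    obtain ⟨t, ht, rfl⟩ := hspec _ hν
    have ht2 := one_lt_sq_iff_one_lt_abs t |>.mpr ht
    simp only [Complex.ofReal_mul_I_sq, Complex.ofReal_im, Complex.ofReal_re, true_and]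
    linarith
  · rw [← mem_spectrum_iff_isRoot_charpoly, cm_add, cm_one, cm_pow, cm_inv] at hμ
    obtain ⟨_, hν, rfl⟩ := exists_mem_spectrum_eq_one_add_inv_sq hunit hμ
    obtain ⟨t, ht, rfl⟩ := hspec _ hν
    have ht2 := one_lt_sq_iff_one_lt_abs t |>.mpr ht
    simp only [Complex.one_add_inv_ofReal_mul_I_sq, Complex.ofReal_im, Complex.ofReal_re,
      true_and]
    exact ⟨sub_pos.mpr (inv_lt_one_of_one_lt₀ ht2), sub_lt_self 1 (inv_pos.mpr (by linarith))⟩
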